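/- arXiv:2603.25395 — 3 statements merged into one kernel-verified Lean document; each statement's English description precedes it below -/
import Mathlib

section
/- Let (Ω, ℱ, P) be a probability space, E a real normed vector space, k ∈ ℕ, and for each i ∈ {1, …, k} let Yᵢ : Ω × ℝ → E be a random target trajectory such that for P-almost every ω the map t ↦ Yᵢ(ω, t) is Lᵢ-Lipschitz, where 0 ≤ Lᵢ < vᵢ. Fix predicted positions ŷᵢ ∈ E, predicted times t̂ᵢ ∈ ℝ, radii Gᵢ ≥ 0, and δ ∈ [0, 1]. If P( ∀ i, ‖Yᵢ(·, t̂ᵢ) − ŷᵢ‖ ≤ Gᵢ ) ≥ (1 − δ)^k, then P( ∀ i, ∃ Δᵢ ∈ [0, Gᵢ/(vᵢ − Lᵢ)], ‖Yᵢ(·, t̂ᵢ + Δᵢ) − ŷᵢ‖ ≤ vᵢ·Δᵢ ) ≥ (1 − δ)^k. -/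
open MeasureTheory

/-- Lemma 1 of the paper: if with probability at least `(1 - δ)^k` every target `i` lies within
distance `G i` of its predicted position `yhat i` at the predicted time `that i`, and each target
trajectory is a.s. `L i`-Lipschitz with `L i < v i`, then with probability at least
`(1 - δ)^k` every target can be intercepted (at speed `v i`, starting from `yhat i` at time
`that i`) within an additional delay of at most `G i / (v i - L i)`. -/
theorem key_subtasks_completion_time_bound
    {Ω : Type*} [MeasurableSpace Ω] (P : Measure Ω) [IsProbabilityMeasure P]
    {E : Type*} [NormedAddCommGroup E] [NormedSpace ℝ E]
    {k : ℕ} (Y : Fin k → Ω → ℝ → E) (L v : Fin k → ℝ)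
    (hL : ∀ i, 0 ≤ L i) (hLv : ∀ i, L i < v i)
    (hlip : ∀ i, ∀ᵐ ω ∂P, LipschitzWith (L i).toNNReal (Y i ω))
    (yhat : Fin k → E) (that : Fin k → ℝ) (G : Fin k → ℝ) (hG : ∀ i, 0 ≤ G i)
    (δ : ℝ) (hδ : δ ∈ Set.Icc (0 : ℝ) 1)
    (hcov : ENNReal.ofReal ((1 - δ) ^ k) ≤
      P {ω | ∀ i, ‖Y i ω (that i) - yhat i‖ ≤ G i}) :
    ENNReal.ofReal ((1 - δ) ^ k) ≤
      P {ω | ∀ i, ∃ Δ : ℝ, Δ ∈ Set.Icc 0 (G i / (v i - L i)) ∧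
        ‖Y i ω (that i + Δ) - yhat i‖ ≤ v i * Δ} := by
  refine hcov.trans (measure_mono_ae ?_)
  have hall : ∀ᵐ ω ∂P, ∀ i, LipschitzWith (L i).toNNReal (Y i ω) := ae_all_iff.mpr hlip
  filter_upwards [hall] with ω hω hcovω
  intro i
  have hvL : 0 < v i - L i := sub_pos.mpr (hLv i)
  refine ⟨G i / (v i - L i), ⟨div_nonneg (hG i) hvL.le, le_refl _⟩, ?_⟩
  set Δ := G i / (v i - L i)
  have hΔ : 0 ≤ Δ := div_nonneg (hG i) hvL.le
  have h1 : ‖Y i ω (that i + Δ) - Y i ω (that i)‖ ≤ L i * Δ := by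
    have := (hω i).dist_le_mul (that i + Δ) (that i)
    rw [dist_eq_norm] at this
    simpa [Real.dist_eq, abs_of_nonneg hΔ, Real.coe_toNNReal _ (hL i)] using this
  have h2 : ‖Y i ω (that i + Δ) - yhat i‖ ≤ L i * Δ + G i :=
    (norm_sub_le_norm_sub_add_norm_sub _ _ _).trans (add_le_add h1 (hcovω i))
  have hG' : G i = (v i - L i) * Δ := by
    show G i = (v i - L i) * (G i / (v i - L i))
    field_simp [hvL.ne']
  calc ‖Y i ω (that i + Δ) - yhat i‖ ≤ L i * Δ + G i := h2
    _ = v i * Δ := by rw [hG']; ring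
end

section
/- Let X₁, …, X_{n+1} be independent and identically distributed real-valued random variables on a probability space (Ω, ℱ, P), let δ ∈ (0, 1), and set p = ⌈(n + 1)(1 − δ)⌉. Assume p ≤ n and let C be the p-th smallest value among X₁, …, X_n (the p-th order statistic of the calibration sample). Then P(X_{n+1} ≤ C) ≥ 1 − δ. -/
open MeasureTheory ProbabilityTheory

/-- The `p`-th smallest value (the `p`-th order statistic, `1 ≤ p ≤ n`) among `x 0, …, x (n-1)`:
the least `c` such that at least `p` of the values are `≤ c`. -/
noncomputable def orderStat {n : ℕ} (p : ℕ) (x : Fin n → ℝ) : ℝ :=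
  sInf {c : ℝ | p ≤ (Finset.univ.filter fun i => x i ≤ c).card}

section det
variable {n p : ℕ}

lemma orderStat_nonempty_fin (hp1 : 1 ≤ p) (hpn : p ≤ n) : Nonempty (Fin n) := ⟨⟨0, lt_of_lt_of_le hp1 hpn⟩⟩

lemma orderStat_set_nonempty (hp1 : 1 ≤ p) (hpn : p ≤ n) (x : Fin n → ℝ) :
    {c : ℝ | p ≤ (Finset.univ.filter fun i => x i ≤ c).card}.Nonempty := by
  haveI : Nonempty (Fin n) := orderStat_nonempty_fin hp1 hpn
  refine ⟨Finset.univ.sup' Finset.univ_nonempty x, ?_⟩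
  have : (Finset.univ.filter fun i => x i ≤ Finset.univ.sup' Finset.univ_nonempty x) =
      Finset.univ := by
    refine Finset.eq_univ_iff_forall.2 fun i => Finset.mem_filter.2 ⟨Finset.mem_univ _, ?_⟩
    exact Finset.le_sup' x (Finset.mem_univ i)
  simp only [Set.mem_setOf_eq, this, Finset.card_univ, Fintype.card_fin]
  exact hpn

lemma orderStat_bddBelow (hp1 : 1 ≤ p) (hpn : p ≤ n) (x : Fin n → ℝ) :
    BddBelow {c : ℝ | p ≤ (Finset.univ.filter fun i => x i ≤ c).card} := by
  haveI : Nonempty (Fin n) := orderStat_nonempty_fin hp1 hpn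
  refine ⟨Finset.univ.inf' Finset.univ_nonempty x, fun c hc => ?_⟩
  have hcard : 0 < (Finset.univ.filter fun i => x i ≤ c).card := lt_of_lt_of_le hp1 hc
  obtain ⟨i, hi⟩ := Finset.card_pos.1 hcard
  have := (Finset.mem_filter.1 hi).2
  exact le_trans (Finset.inf'_le x (Finset.mem_univ i)) this

lemma orderStat_le (hp1 : 1 ≤ p) (hpn : p ≤ n) (x : Fin n → ℝ) {c : ℝ} (hc : p ≤ (Finset.univ.filter fun i => x i ≤ c).card) :
    orderStat p x ≤ c :=
  csInf_le (orderStat_bddBelow hp1 hpn x) hc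

lemma orderStat_mem (hp1 : 1 ≤ p) (hpn : p ≤ n) (x : Fin n → ℝ) :
    p ≤ (Finset.univ.filter fun i => x i ≤ orderStat p x).card := by
  haveI : Nonempty (Fin n) := orderStat_nonempty_fin hp1 hpn
  by_contra h
  push_neg at h
  set C := orderStat p x with hCdef
  set T := Finset.univ.filter fun i => C < x i with hT
  rcases T.eq_empty_or_nonempty with hTe | hTne
  · have : (Finset.univ.filter fun i => x i ≤ C) = Finset.univ := by
      refine Finset.eq_univ_iff_forall.2 fun i => Finset.mem_filter.2 ⟨Finset.mem_univ _, ?_⟩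
      by_contra hlt
      have : i ∈ T := Finset.mem_filter.2 ⟨Finset.mem_univ _, lt_of_not_ge hlt⟩
      simp [hTe] at this
    rw [this] at h
    simp only [Finset.card_univ, Fintype.card_fin] at h
    exact absurd hpn (not_le.2 h)
  · set c' := T.inf' hTne x with hc'
    have hCc' : C < c' := by
      rw [hc', Finset.lt_inf'_iff]
      intro i hi
      exact (Finset.mem_filter.1 hi).2
    have hle : ∀ c ∈ {c : ℝ | p ≤ (Finset.univ.filter fun i => x i ≤ c).card}, c' ≤ c := by
      intro c hc
      by_contra hcc
      push_neg at hcc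
      have hsub : (Finset.univ.filter fun i => x i ≤ c) ⊆
          Finset.univ.filter fun i => x i ≤ C := by
        intro i hi
        have hxi := (Finset.mem_filter.1 hi).2
        refine Finset.mem_filter.2 ⟨Finset.mem_univ _, ?_⟩
        by_contra hxC
        have hiT : i ∈ T := Finset.mem_filter.2 ⟨Finset.mem_univ _, lt_of_not_ge hxC⟩
        have := Finset.inf'_le x hiT
        rw [← hc'] at this
        linarith
      have := Finset.card_le_card hsub
      have hcmem := hc
      simp only [Set.mem_setOf_eq] at hcmem
      omega
    have : c' ≤ C := le_csInf (orderStat_set_nonempty hp1 hpn x) hle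
    linarith

lemma count_lt_orderStat (hp1 : 1 ≤ p) (hpn : p ≤ n) (x : Fin n → ℝ) :
    (Finset.univ.filter fun i => x i < orderStat p x).card < p := by
  by_contra h
  push_neg at h
  set C := orderStat p x with hCdef
  set F := Finset.univ.filter fun i => x i < C with hF
  have hFne : F.Nonempty := Finset.card_pos.1 (lt_of_lt_of_le hp1 h)
  set m := F.sup' hFne x with hm
  have hmC : m < C := by
    rw [hm, Finset.sup'_lt_iff]
    intro i hi
    exact (Finset.mem_filter.1 hi).2
  have hsub : F ⊆ Finset.univ.filter fun i => x i ≤ m := by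
    intro i hi
    exact Finset.mem_filter.2 ⟨Finset.mem_univ _, Finset.le_sup' x hi⟩
  have hmem : p ≤ (Finset.univ.filter fun i => x i ≤ m).card :=
    le_trans h (Finset.card_le_card hsub)
  have := orderStat_le hp1 hpn x hmem
  linarith

lemma le_orderStat_iff (hp1 : 1 ≤ p) (hpn : p ≤ n) (y : Fin (n + 1) → ℝ) :
    y (Fin.last n) ≤ orderStat p (fun i : Fin n => y i.castSucc) ↔
      (Finset.univ.filter fun i : Fin (n + 1) => y i < y (Fin.last n)).card < p := by
  set x : Fin n → ℝ := fun i => y i.castSucc with hx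
  set t := y (Fin.last n) with ht
  set C := orderStat p x with hCdef
  have hcard : (Finset.univ.filter fun i : Fin (n + 1) => y i < t).card =
      (Finset.univ.filter fun i : Fin n => x i < t).card := by
    rw [Finset.card_filter, Finset.card_filter, Fin.sum_univ_castSucc]
    simp [hx, ht]
  constructor
  · intro h
    rw [hcard]
    refine lt_of_le_of_lt (Finset.card_le_card ?_) (count_lt_orderStat hp1 hpn x)
    intro i hi
    exact Finset.mem_filter.2 ⟨Finset.mem_univ _, lt_of_lt_of_le (Finset.mem_filter.1 hi).2 h⟩
  · intro h
    by_contra hnot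
    push_neg at hnot
    rw [hcard] at h
    have hsub : (Finset.univ.filter fun i => x i ≤ C) ⊆
        Finset.univ.filter fun i : Fin n => x i < t := by
      intro i hi
      exact Finset.mem_filter.2 ⟨Finset.mem_univ _,
        lt_of_le_of_lt (Finset.mem_filter.1 hi).2 hnot⟩
    have := le_trans (orderStat_mem hp1 hpn x) (Finset.card_le_card hsub)
    omega

lemma pigeonhole {N : ℕ} (hp1 : 1 ≤ p) (hpN : p ≤ N) (y : Fin N → ℝ) :
    p ≤ (Finset.univ.filter fun j : Fin N =>
      (Finset.univ.filter fun i => y i < y j).card < p).card := by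
  refine le_trans (orderStat_mem hp1 hpN y) (Finset.card_le_card ?_)
  intro j hj
  have hjC := (Finset.mem_filter.1 hj).2
  refine Finset.mem_filter.2 ⟨Finset.mem_univ _, ?_⟩
  refine lt_of_le_of_lt (Finset.card_le_card ?_) (count_lt_orderStat hp1 hpN y)
  intro i hi
  exact Finset.mem_filter.2 ⟨Finset.mem_univ _,
    lt_of_lt_of_le (Finset.mem_filter.1 hi).2 hjC⟩

end det

open scoped ENNReal

lemma map_perm_eq_pi {Ω : Type*} [MeasurableSpace Ω] (P : Measure Ω) [IsProbabilityMeasure P]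
    {N : ℕ} (f : Fin N → Ω → ℝ) (hm : ∀ i, Measurable (f i))
    (h : iIndepFun f P) (σ : Equiv.Perm (Fin N)) :
    P.map (fun ω i => f (σ i) ω) = Measure.pi (fun i => P.map (f (σ i))) := by
  haveI : ∀ i : Fin N, IsProbabilityMeasure (P.map (f (σ i))) :=
    fun i => Measure.isProbabilityMeasure_map (hm (σ i)).aemeasurable
  refine (Measure.pi_eq fun s hs => ?_).symm
  rw [Measure.map_apply (measurable_pi_lambda _ fun i => hm (σ i)) (MeasurableSet.univ_pi hs)]
  have hpre : (fun ω i => f (σ i) ω) ⁻¹' Set.pi Set.univ s =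
      ⋂ j ∈ Finset.univ, f j ⁻¹' s (σ.symm j) := by
    ext ω
    simp only [Set.mem_preimage, Set.mem_pi, Set.mem_univ, true_imp_iff, Set.mem_iInter,
      Finset.mem_univ, Set.mem_preimage]
    constructor
    · intro hω j
      simpa using hω (σ.symm j)
    · intro hω i
      simpa using hω (σ i)
  rw [hpre, h.measure_inter_preimage_eq_mul Finset.univ (fun j _ => hs (σ.symm j))]
  rw [← Equiv.prod_comp σ (fun j => P (f j ⁻¹' s (σ.symm j)))]
  simp only [Equiv.symm_apply_apply]
  exact Finset.prod_congr rfl fun i _ => (Measure.map_apply (hm (σ i)) (hs i)).symm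

/-- Split conformal prediction coverage guarantee: if `X 0, …, X n` are i.i.d. real random
variables, `δ ∈ (0, 1)`, `p = ⌈(n + 1)(1 - δ)⌉ ≤ n`, and `C` is the `p`-th smallest value
among the first `n` of them (the calibration sample), then the test score `X n` is at most
`C` with probability at least `1 - δ`. -/
theorem conformal_coverage
    {Ω : Type*} [MeasurableSpace Ω] (P : Measure Ω) [IsProbabilityMeasure P]
    {n : ℕ} (X : Fin (n + 1) → Ω → ℝ)
    (hmeas : ∀ i, Measurable (X i))
    (hindep : iIndepFun X P)
    (hident : ∀ i j, IdentDistrib (X i) (X j) P P)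
    (δ : ℝ) (hδ : δ ∈ Set.Ioo (0 : ℝ) 1)
    (p : ℕ) (hp : p = ⌈((n : ℝ) + 1) * (1 - δ)⌉₊) (hpn : p ≤ n)
    (C : Ω → ℝ) (hC : ∀ ω, C ω = orderStat p (fun i : Fin n => X i.castSucc ω)) :
    ENNReal.ofReal (1 - δ) ≤ P {ω | X (Fin.last n) ω ≤ C ω} := by
  obtain ⟨hδ0, hδ1⟩ := hδ
  have hp1 : 1 ≤ p := by
    rw [hp, Nat.one_le_ceil_iff]
    have : (0:ℝ) < (n:ℝ) + 1 := by positivity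
    nlinarith
  have hpceil : ((n : ℝ) + 1) * (1 - δ) ≤ p := by rw [hp]; exact Nat.le_ceil _
  -- marginals
  haveI : ∀ i : Fin (n + 1), IsProbabilityMeasure (P.map (X i)) :=
    fun i => Measure.isProbabilityMeasure_map (hmeas i).aemeasurable
  have hmarg : ∀ i, P.map (X i) = P.map (X 0) := fun i => (hident i 0).map_eq
  set ν : Measure (Fin (n + 1) → ℝ) := Measure.pi (fun _ => P.map (X 0)) with hν
  have hlaw : ∀ σ : Equiv.Perm (Fin (n + 1)), P.map (fun ω i => X (σ i) ω) = ν := by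
    intro σ
    rw [map_perm_eq_pi P X hmeas hindep σ, hν]
    congr 1
    exact funext fun i => hmarg (σ i)
  -- the event in the sample space
  set F : (Fin (n + 1) → ℝ) → ℕ :=
    fun y => (Finset.univ.filter fun i => y i < y (Fin.last n)).card with hF
  have hFmeas : Measurable F := by
    have hFeq : F = fun y => ∑ i : Fin (n + 1), if y i < y (Fin.last n) then 1 else 0 :=
      funext fun y => Finset.card_filter _ _
    rw [hFeq]
    exact Finset.measurable_sum _ fun i _ =>
      Measurable.ite (measurableSet_lt (measurable_pi_apply i)
        (measurable_pi_apply (Fin.last n))) measurable_const measurable_const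
  set B : Set (Fin (n + 1) → ℝ) := F ⁻¹' Set.Iio p with hB
  have hBmeas : MeasurableSet B := hFmeas measurableSet_Iio
  set A : Fin (n + 1) → Set Ω :=
    fun j => {ω | (Finset.univ.filter fun i => X i ω < X j ω).card < p} with hA
  have hAeq : ∀ j, A j = (fun ω i => X (Equiv.swap j (Fin.last n) i) ω) ⁻¹' B := by
    intro j
    ext ω
    simp only [hA, Set.mem_setOf_eq, Set.mem_preimage, hB, hF, Set.mem_Iio]
    have hcc : (Finset.univ.filter fun i =>
        X (Equiv.swap j (Fin.last n) i) ω < X (Equiv.swap j (Fin.last n) (Fin.last n)) ω).card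
        = (Finset.univ.filter fun i => X i ω < X j ω).card := by
      rw [Equiv.swap_apply_right, Finset.card_filter, Finset.card_filter]
      exact Equiv.sum_comp (Equiv.swap j (Fin.last n))
        (fun i => if X i ω < X j ω then 1 else 0)
    rw [hcc]
  have hAP : ∀ j, P (A j) = ν B := by
    intro j
    rw [hAeq j, ← Measure.map_apply (measurable_pi_lambda _ fun i => hmeas _) hBmeas,
      hlaw (Equiv.swap j (Fin.last n))]
  have hAm : ∀ j, MeasurableSet (A j) := by
    intro j
    rw [hAeq j]
    exact (measurable_pi_lambda _ fun i => hmeas _) hBmeas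
  have hAlast : A (Fin.last n) = {ω | X (Fin.last n) ω ≤ C ω} := by
    ext ω
    simp only [hA, Set.mem_setOf_eq]
    rw [hC ω]
    exact (le_orderStat_iff hp1 hpn (fun i => X i ω)).symm
  -- pointwise pigeonhole bound
  have hsum : (p : ℝ≥0∞) ≤ ∑ j : Fin (n + 1), P (A j) := by
    have hps : ∀ ω, (p : ℝ≥0∞) ≤ ∑ j : Fin (n + 1), (A j).indicator (fun _ => 1) ω := by
      intro ω
      have hpg := pigeonhole hp1 (le_trans hpn (Nat.le_succ n)) (fun i => X i ω)
      have hind : ∑ j : Fin (n + 1), (A j).indicator (fun _ => (1 : ℝ≥0∞)) ω =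
          ((Finset.univ.filter fun j : Fin (n + 1) =>
            (Finset.univ.filter fun i => X i ω < X j ω).card < p).card : ℝ≥0∞) := by
        rw [Finset.card_filter]
        push_cast
        refine Finset.sum_congr rfl fun j _ => ?_
        by_cases hj : (Finset.univ.filter fun i => X i ω < X j ω).card < p
        · simp [Set.indicator, hA, hj]
        · simp [Set.indicator, hA, hj]
      rw [hind]
      exact_mod_cast hpg
    calc (p : ℝ≥0∞) = ∫⁻ _, (p : ℝ≥0∞) ∂P := by rw [lintegral_const, measure_univ, mul_one]
      _ ≤ ∫⁻ ω, ∑ j : Fin (n + 1), (A j).indicator (fun _ => 1) ω ∂P := lintegral_mono hps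
      _ = ∑ j : Fin (n + 1), P (A j) := by
          rw [lintegral_finset_sum _ fun j _ => measurable_const.indicator (hAm j)]
          exact Finset.sum_congr rfl fun j _ => lintegral_indicator_one (hAm j)
  have hNB : (p : ℝ≥0∞) ≤ (n + 1 : ℕ) * ν B := by
    calc (p : ℝ≥0∞) ≤ ∑ j : Fin (n + 1), P (A j) := hsum
      _ = (n + 1 : ℕ) * ν B := by
          simp [hAP, Finset.sum_const, Finset.card_univ, nsmul_eq_mul]
  rw [← hAlast, hAP (Fin.last n)]
  have hN0 : ((n + 1 : ℕ) : ℝ≥0∞) ≠ 0 := by exact_mod_cast Nat.succ_ne_zero n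
  have hNtop : ((n + 1 : ℕ) : ℝ≥0∞) ≠ ⊤ := ENNReal.natCast_ne_top _
  rw [← ENNReal.mul_le_mul_iff_right hN0 hNtop]
  refine le_trans ?_ hNB
  rw [← ENNReal.ofReal_natCast, ← ENNReal.ofReal_natCast, ← ENNReal.ofReal_mul (by positivity)]
  apply ENNReal.ofReal_le_ofReal
  push_cast
  nlinarith
end

section
/- Let E be a real inner product space, let I ⊆ ℝ be an interval, let v > v* ≥ 0, and let x, y : ℝ → E be differentiable on I with ‖y′(t)‖ ≤ v* for all t ∈ I, x(t) ≠ y(t) for all t ∈ I, and x′(t) = v · (y(t) − x(t)) / ‖y(t) − x(t)‖ for all t ∈ I (pure-pursuit motion at speed v). Then for all s, t ∈ I with s ≤ t, ‖x(t) − y(t)‖ ≤ ‖x(s) − y(s)‖ − (v − v*)·(t − s). -/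
open Set

private lemma hasDerivAt_norm_aux {E : Type*} [NormedAddCommGroup E] [InnerProductSpace ℝ E]
    {f : ℝ → E} {f' : E} {t : ℝ} (hf : HasDerivAt f f' t) (h0 : f t ≠ 0) :
    HasDerivAt (fun s => ‖f s‖) ((inner ℝ (f t) f' : ℝ) / ‖f t‖) t := by
  have h1 : HasDerivAt (fun s => Real.sqrt (‖f s‖ ^ 2))
      ((2 * (inner ℝ (f t) f' : ℝ)) / (2 * Real.sqrt (‖f t‖ ^ 2))) t :=
    hf.norm_sq.sqrt (pow_ne_zero 2 (norm_ne_zero_iff.mpr h0))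
  have h2 : Real.sqrt (‖f t‖ ^ 2) = ‖f t‖ := Real.sqrt_sq (norm_nonneg _)
  have h3 : (fun s => Real.sqrt (‖f s‖ ^ 2)) = fun s => ‖f s‖ := by
    funext s; exact Real.sqrt_sq (norm_nonneg _)
  rw [h3, h2] at h1
  have hn : ‖f t‖ ≠ 0 := norm_ne_zero_iff.mpr h0
  convert h1 using 1
  field_simp

/-- Pure-pursuit estimate: if on an interval `I` the pursuer `x` moves with speed `v` directly
toward the target `y`, whose speed never exceeds `v* < v`, then the distance between them
decreases at rate at least `v - v*`:
`‖x t - y t‖ ≤ ‖x s - y s‖ - (v - v*) (t - s)` for `s ≤ t` in `I`. -/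
theorem pure_pursuit_distance_decay
    {E : Type*} [NormedAddCommGroup E] [InnerProductSpace ℝ E]
    (I : Set ℝ) (hI : I.OrdConnected)
    (v vstar : ℝ) (hvstar : 0 ≤ vstar) (hv : vstar < v)
    (x y x' y' : ℝ → E)
    (hx : ∀ t ∈ I, HasDerivWithinAt x (x' t) I t)
    (hy : ∀ t ∈ I, HasDerivWithinAt y (y' t) I t)
    (hy' : ∀ t ∈ I, ‖y' t‖ ≤ vstar)
    (hne : ∀ t ∈ I, x t ≠ y t)
    (hpursuit : ∀ t ∈ I, x' t = (v / ‖y t - x t‖) • (y t - x t)) :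
    ∀ s ∈ I, ∀ t ∈ I, s ≤ t →
      ‖x t - y t‖ ≤ ‖x s - y s‖ - (v - vstar) * (t - s) := by
  intro s hs t ht hst
  set u : ℝ → E := fun r => x r - y r with hu
  set d : ℝ → ℝ := fun r => ‖u r‖ with hd
  have hconv : Convex ℝ I := hI.convex
  -- derivative of u at interior points
  have hderiv : ∀ r ∈ interior I, HasDerivAt d ((inner ℝ (u r) (x' r - y' r) : ℝ) / ‖u r‖) r := by
    intro r hr
    have hrI : r ∈ I := interior_subset hr
    have hnhds : I ∈ nhds r := mem_interior_iff_mem_nhds.mp hr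
    have hu' : HasDerivAt u (x' r - y' r) r :=
      (((hx r hrI).sub (hy r hrI)).hasDerivAt hnhds)
    exact hasDerivAt_norm_aux hu' (sub_ne_zero.mpr (hne r hrI))
  -- bound on deriv d
  have hbound : ∀ r ∈ interior I, deriv d r ≤ -(v - vstar) := by
    intro r hr
    have hrI : r ∈ I := interior_subset hr
    have hd' := (hderiv r hr).deriv
    rw [hd']
    have hun : u r ≠ 0 := sub_ne_zero.mpr (hne r hrI)
    have hnorm : (0:ℝ) < ‖u r‖ := norm_pos_iff.mpr hun
    have hxr : x' r = -((v / ‖u r‖) • u r) := by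
      rw [hpursuit r hrI]
      have : y r - x r = -(u r) := by simp [hu]
      rw [this]
      simp [norm_neg, smul_neg]
    have hinner1 : (inner ℝ (u r) (x' r) : ℝ) = -(v * ‖u r‖) := by
      rw [hxr, inner_neg_right, real_inner_smul_right, real_inner_self_eq_norm_sq]
      field_simp
    have hinner2 : (inner ℝ (u r) (y' r) : ℝ) ≥ -(‖u r‖ * vstar) := by
      have h1 := abs_real_inner_le_norm (u r) (y' r)
      have h2 : ‖u r‖ * ‖y' r‖ ≤ ‖u r‖ * vstar :=
        mul_le_mul_of_nonneg_left (hy' r hrI) (norm_nonneg _)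
      have := (abs_le.mp (h1.trans h2)).1
      linarith
    have : (inner ℝ (u r) (x' r - y' r) : ℝ) ≤ -((v - vstar) * ‖u r‖) := by
      rw [inner_sub_right, hinner1]
      nlinarith
    calc (inner ℝ (u r) (x' r - y' r) : ℝ) / ‖u r‖
        ≤ -((v - vstar) * ‖u r‖) / ‖u r‖ := by
          exact div_le_div_of_nonneg_right this hnorm.le |>.trans_eq rfl
      _ = -(v - vstar) := by field_simp
  -- continuity of d on I
  have hcont : ContinuousOn d I := by
    apply ContinuousOn.norm
    intro r hr
    exact ((hx r hr).sub (hy r hr)).continuousWithinAt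
  have hdiff : DifferentiableOn ℝ d (interior I) := fun r hr =>
    ((hderiv r hr).differentiableAt).differentiableWithinAt
  have key := hconv.image_sub_le_mul_sub_of_deriv_le hcont hdiff hbound s hs t ht hst
  have hdt : d t = ‖x t - y t‖ := rfl
  have hds : d s = ‖x s - y s‖ := rfl
  rw [hdt, hds] at key
  linarith
end
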